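/- (Algebraic identity underlying Rivière's conservation law.) For sufficiently smooth matrix-valued A, B and vector-valued u on an open set U ⊂ ℝ², if ∇A + ∇⊥B = AΩ pointwise, then div(A∇u − B∇⊥u) = A(Δu + Ω · ∇u) pointwise in U. -/

import Mathlib

noncomputable section

def e2 (j : Fin 2) : EuclideanSpace ℝ (Fin 2) := EuclideanSpace.single j 1

def pd (f : EuclideanSpace ℝ (Fin 2) → ℝ) (x : EuclideanSpace ℝ (Fin 2)) (j : Fin 2) : ℝ :=
  fderiv ℝ f x (e2 j)

def perp {α : Type*} [Neg α] (g : Fin 2 → α) : Fin 2 → α :=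
  fun j => if j = 0 then -g 1 else g 0

section helpers
variable {x : EuclideanSpace ℝ (Fin 2)} {f g : EuclideanSpace ℝ (Fin 2) → ℝ}

lemma pd_add (hf : DifferentiableAt ℝ f x) (hg : DifferentiableAt ℝ g x) (j : Fin 2) :
    pd (fun y => f y + g y) x j = pd f x j + pd g x j := by
  unfold pd; rw [fderiv_fun_add hf hg]; rfl

lemma pd_sub (hf : DifferentiableAt ℝ f x) (hg : DifferentiableAt ℝ g x) (j : Fin 2) :
    pd (fun y => f y - g y) x j = pd f x j - pd g x j := by
  unfold pd; rw [fderiv_fun_sub hf hg]; rfl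

lemma pd_sum_mul {ι : Type*} (s : Finset ι) (f g : ι → EuclideanSpace ℝ (Fin 2) → ℝ)
    (hf : ∀ k ∈ s, DifferentiableAt ℝ (f k) x)
    (hg : ∀ k ∈ s, DifferentiableAt ℝ (g k) x) (j : Fin 2) :
    pd (fun y => ∑ k ∈ s, f k y * g k y) x j
      = ∑ k ∈ s, (pd (f k) x j * g k x + f k x * pd (g k) x j) := by
  unfold pd
  rw [fderiv_fun_sum (fun k hk => (hf k hk).fun_mul (hg k hk)), ContinuousLinearMap.sum_apply]
  refine Finset.sum_congr rfl fun k hk => ?_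
  rw [fderiv_fun_mul (hf k hk) (hg k hk)]
  simp [mul_comm]
  ring

lemma diff_pd (hf : ContDiffAt ℝ (⊤ : ℕ∞) f x) (j : Fin 2) :
    DifferentiableAt ℝ (fun y => pd f y j) x := by
  have h1 : ContDiffAt ℝ (⊤ : ℕ∞) (fderiv ℝ f) x := hf.fderiv_right (by simp)
  exact (h1.differentiableAt (by simp)).clm_apply (differentiableAt_const _)

lemma pd_symm (hf : ContDiffAt ℝ (⊤ : ℕ∞) f x) (j j' : Fin 2) :
    pd (fun y => pd f y j) x j' = pd (fun y => pd f y j') x j := by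
  have hd : DifferentiableAt ℝ (fderiv ℝ f) x :=
    (hf.fderiv_right (m := 1) (WithTop.coe_le_coe.mpr le_top)).differentiableAt one_ne_zero
  have key : ∀ v w, pd (fun y => fderiv ℝ f y v) x w = fderiv ℝ (fderiv ℝ f) x (e2 w) v := by
    intro v w
    unfold pd
    rw [fderiv_clm_apply hd (differentiableAt_const v)]
    simp
  show pd (fun y => fderiv ℝ f y (e2 j)) x j' = pd (fun y => fderiv ℝ f y (e2 j')) x j
  rw [key, key]
  exact (hf.isSymmSndFDerivAt (by rw [minSmoothness_of_isRCLikeNormedField]; show ((2 : ℕ∞) : WithTop ℕ∞) ≤ _; exact WithTop.coe_le_coe.mpr le_top)) (e2 j') (e2 j)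

end helpers

/-- algebraic identity underlying Rivière's conservation law: for smooth
matrix fields `A, B`, a smooth `u : U → ℝ^m` and `Ω : U → M(m) ⊗ ℝ²` on an open `U ⊆ ℝ²`,
if `∇A + ∇⊥B = AΩ` pointwise then `div(A∇u − B∇⊥u) = A(Δu + Ω·∇u)` pointwise in `U`. -/
theorem riviere_pointwise_identity (m : ℕ) (U : Set (EuclideanSpace ℝ (Fin 2)))
    (hU : IsOpen U)
    (A B : EuclideanSpace ℝ (Fin 2) → Fin m → Fin m → ℝ)
    (Ω : EuclideanSpace ℝ (Fin 2) → Fin 2 → Fin m → Fin m → ℝ)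
    (u : EuclideanSpace ℝ (Fin 2) → Fin m → ℝ)
    (hA : ∀ i k, ContDiffOn ℝ (⊤ : ℕ∞) (fun y => A y i k) U)
    (hB : ∀ i k, ContDiffOn ℝ (⊤ : ℕ∞) (fun y => B y i k) U)
    (hΩ : ∀ j i k, ContDiffOn ℝ (⊤ : ℕ∞) (fun y => Ω y j i k) U)
    (hu : ∀ k, ContDiffOn ℝ (⊤ : ℕ∞) (fun y => u y k) U)
    (hrel : ∀ x ∈ U, ∀ j : Fin 2, ∀ i k : Fin m,
      pd (fun y => A y i k) x j + perp (fun j' => pd (fun y => B y i k) x j') j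
        = ∑ l, A x i l * Ω x j l k) :
    ∀ x ∈ U, ∀ i : Fin m,
      -- div(A∇u − B∇⊥u)
      (∑ j : Fin 2,
        pd (fun y => (∑ k, A y i k * pd (fun z => u z k) y j)
              - ∑ k, B y i k * perp (fun j' => pd (fun z => u z k) y j') j) x j)
      =
      -- A(Δu + Ω·∇u)
      ∑ k, A x i k *
        ((∑ j : Fin 2, pd (fun y => pd (fun z => u z k) y j) x j)
          + ∑ j : Fin 2, ∑ l, Ω x j k l * pd (fun z => u z l) x j) := by
  intro x hx i
  have hxU : U ∈ nhds x := hU.mem_nhds hx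
  have cdu : ∀ k, ContDiffAt ℝ (⊤ : ℕ∞) (fun y => u y k) x := fun k => (hu k).contDiffAt hxU
  have dA : ∀ k, DifferentiableAt ℝ (fun y => A y i k) x :=
    fun k => ((hA i k).contDiffAt hxU).differentiableAt (by simp)
  have dB : ∀ k, DifferentiableAt ℝ (fun y => B y i k) x :=
    fun k => ((hB i k).contDiffAt hxU).differentiableAt (by simp)
  have du : ∀ k (j : Fin 2), DifferentiableAt ℝ (fun y => pd (fun z => u z k) y j) x :=
    fun k j => diff_pd (cdu k) j
  have e0 : (fun y => (∑ k, A y i k * pd (fun z => u z k) y 0)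
        - ∑ k, B y i k * perp (fun j' => pd (fun z => u z k) y j') 0)
      = fun y => (∑ k, A y i k * pd (fun z => u z k) y 0)
        + ∑ k, B y i k * pd (fun z => u z k) y 1 := by
    funext y
    simp [perp, mul_neg, Finset.sum_neg_distrib, sub_neg_eq_add]
  have e1 : (fun y => (∑ k, A y i k * pd (fun z => u z k) y 1)
        - ∑ k, B y i k * perp (fun j' => pd (fun z => u z k) y j') 1)
      = fun y => (∑ k, A y i k * pd (fun z => u z k) y 1)
        - ∑ k, B y i k * pd (fun z => u z k) y 0 := by
    funext y
    simp [perp]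
  rw [Fin.sum_univ_two, e0, e1]
  rw [pd_add (DifferentiableAt.fun_sum fun k _ => (dA k).fun_mul (du k 0))
      (DifferentiableAt.fun_sum fun k _ => (dB k).fun_mul (du k 1)),
    pd_sub (DifferentiableAt.fun_sum fun k _ => (dA k).fun_mul (du k 1))
      (DifferentiableAt.fun_sum fun k _ => (dB k).fun_mul (du k 0)),
    pd_sum_mul _ _ _ (fun k _ => dA k) (fun k _ => du k 0),
    pd_sum_mul _ _ _ (fun k _ => dB k) (fun k _ => du k 1),
    pd_sum_mul _ _ _ (fun k _ => dA k) (fun k _ => du k 1),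
    pd_sum_mul _ _ _ (fun k _ => dB k) (fun k _ => du k 0)]
  have hr0 : ∀ k, pd (fun y => A y i k) x 0
      = (∑ l, A x i l * Ω x 0 l k) + pd (fun y => B y i k) x 1 := by
    intro k
    have h := hrel x hx 0 i k
    simp [perp] at h
    linarith
  have hr1 : ∀ k, pd (fun y => A y i k) x 1
      = (∑ l, A x i l * Ω x 1 l k) - pd (fun y => B y i k) x 0 := by
    intro k
    have h := hrel x hx 1 i k
    simp [perp] at h
    linarith
  have hclair : ∀ k, pd (fun y => pd (fun z => u z k) y 0) x 1
      = pd (fun y => pd (fun z => u z k) y 1) x 0 := fun k => pd_symm (cdu k) 0 1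
  simp only [hr0, hr1, hclair, Fin.sum_univ_two]
  have sw0 : ∑ k, A x i k * (∑ l, Ω x 0 k l * pd (fun z => u z l) x 0)
      = ∑ k, (∑ l, A x i l * Ω x 0 l k) * pd (fun z => u z k) x 0 := by
    simp only [Finset.mul_sum, Finset.sum_mul]
    rw [Finset.sum_comm]
    exact Finset.sum_congr rfl fun k _ => Finset.sum_congr rfl fun l _ => by ring
  have sw1 : ∑ k, A x i k * (∑ l, Ω x 1 k l * pd (fun z => u z l) x 1)
      = ∑ k, (∑ l, A x i l * Ω x 1 l k) * pd (fun z => u z k) x 1 := by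
    simp only [Finset.mul_sum, Finset.sum_mul]
    rw [Finset.sum_comm]
    exact Finset.sum_congr rfl fun k _ => Finset.sum_congr rfl fun l _ => by ring
  simp only [mul_add, add_mul, sub_mul, Finset.sum_add_distrib, Finset.sum_sub_distrib]
  simp only [Finset.mul_sum, Finset.sum_mul] at sw0 sw1 ⊢
  linarith [sw0, sw1]
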